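/- arXiv:1904.12768 — 3 statements merged into one kernel-verified Lean document; each statement's English description precedes it below -/
import Mathlib

section
/- Let σ : [0,∞) → (0,∞) be strictly decreasing, convex, and twice continuously differentiable, let 𝒂̲ := −1/(2σ(0)σ′(0)), and for a > 0 let μ(a) be the unique maximizer of e ↦ −a·σ(e)² − e over [0,∞). Then μ is continuous and strictly increasing on [𝒂̲, ∞), and for every a > 𝒂̲, μ is differentiable at a with μ′(a) = [ 2a²( (σ′(μ(a)))² + σ(μ(a))·σ″(μ(a)) ) ]^{-1} > 0. -/
/-!
With `g = σ σ'`, convexity and strict decrease give `σ' < 0 ≤ σ''`, so `g < 0` and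
`g' = σ'² + σ σ'' > 0`. Hence `φ e = -1 / (2 g e)` is strictly increasing on `[0, ∞)`, with
`φ 0 = 𝒂̲` and `φ' = 2 φ² g'`. The first-order condition at the maximizer `μ a` reads
`a ≤ φ (μ a)`, with equality when `μ a > 0`; for `a ≥ 𝒂̲` the boundary case `μ a = 0` then gives
`a ≤ φ 0 = 𝒂̲ ≤ a`, so `φ (μ a) = a` in all cases. Thus `μ` inverts `φ` on `[𝒂̲, ∞)`: it is strictly
monotone with an interval as image, hence continuous, and the inverse function theorem yields
`μ' a = 1 / φ' (μ a) = 1 / (2 a² g' (μ a))`.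
-/

/-- The (within-`[0,∞)`) derivative of `σ`. -/
noncomputable def sigd (σ : ℝ → ℝ) : ℝ → ℝ := derivWithin σ (Set.Ici 0)

/-- The (within-`[0,∞)`) second derivative of `σ`. -/
noncomputable def sigd2 (σ : ℝ → ℝ) : ℝ → ℝ := derivWithin (sigd σ) (Set.Ici 0)

/-- `𝒂̲ = -1/(2 σ(0) σ'(0))`. -/
noncomputable def alow (σ : ℝ → ℝ) : ℝ := -1 / (2 * σ 0 * sigd σ 0)

/-- `m` is the unique maximizer of `f` on `S`. -/
def UniqueMaxOn (f : ℝ → ℝ) (S : Set ℝ) (m : ℝ) : Prop :=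
  m ∈ S ∧ (∀ e ∈ S, f e ≤ f m) ∧ ∀ e ∈ S, (∀ e' ∈ S, f e' ≤ f e) → e = m


open Set Filter Topology

section OrderInverse

variable {α β : Type*} [LinearOrder α] [LinearOrder β]

theorem StrictMonoOn.strictMonoOn_of_leftInvOn {φ : β → α} {μ : α → β} {s : Set β} {t : Set α}
    (hφ : StrictMonoOn φ s) (hinv : LeftInvOn φ μ t) (hμ : MapsTo μ t s) :
    StrictMonoOn μ t := fun a ha b hb hab =>
  (hφ.lt_iff_lt (hμ ha) (hμ hb)).1 (by rwa [hinv ha, hinv hb])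

theorem StrictMonoOn.image_Ici_eq_of_leftInvOn {φ : β → α} {μ : α → β} {c : β} {a₀ : α}
    (hφ : StrictMonoOn φ (Ici c)) (hinv : LeftInvOn φ μ (Ici a₀)) (hμ : MapsTo μ (Ici a₀) (Ici c)) :
    μ '' Ici a₀ = Ici (μ a₀) := by
  have hmono := hφ.strictMonoOn_of_leftInvOn hinv hμ
  refine subset_antisymm (image_subset_iff.2 fun a ha => hmono.monotoneOn self_mem_Ici ha ha) ?_
  intro e he
  have hec : e ∈ Ici c := (hμ self_mem_Ici).trans he
  have hφe : a₀ ≤ φ e := by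
    simpa only [hinv self_mem_Ici] using hφ.monotoneOn (hμ self_mem_Ici) hec he
  exact ⟨φ e, hφe, hφ.injOn (hμ hφe) hec (hinv hφe)⟩

variable [TopologicalSpace α] [OrderTopology α] [TopologicalSpace β] [OrderTopology β]
  [DenselyOrdered β]

theorem StrictMonoOn.continuousOn_Ici_of_image_Ici {f : α → β} {a₀ : α}
    (hf : StrictMonoOn f (Ici a₀)) (himage : f '' Ici a₀ = Ici (f a₀)) :
    ContinuousOn f (Ici a₀) := by
  intro a ha
  rcases (mem_Ici.1 ha).eq_or_lt with rfl | ha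
  · refine continuousWithinAt_right_of_monotoneOn_of_image_mem_nhdsWithin hf.monotoneOn
      self_mem_nhdsWithin ?_
    rw [himage]
    exact self_mem_nhdsWithin
  · refine (hf.continuousAt_of_image_mem_nhds (Ici_mem_nhds ha) ?_).continuousWithinAt
    rw [himage]
    exact Ici_mem_nhds (hf self_mem_Ici ha.le ha)

end OrderInverse

theorem IsMaxOn.hasDerivWithinAt_Ici_nonpos {f : ℝ → ℝ} {c m f' : ℝ} (hmax : IsMaxOn f (Ici c) m)
    (hm : c ≤ m) (hf : HasDerivWithinAt f f' (Ici c) m) : f' ≤ 0 := by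
  have hone : (1 : ℝ) ∈ posTangentConeAt (Ici c) m := by
    refine mem_posTangentConeAt_of_segment_subset ?_
    rw [segment_eq_Icc (by linarith)]
    exact Icc_subset_Ici_iff (by linarith) |>.2 hm
  simpa using hmax.localize.hasFDerivWithinAt_nonpos hf.hasFDerivWithinAt hone

theorem HasDerivWithinAt.neg_mul_sq_sub_id {σ : ℝ → ℝ} {σ' e : ℝ} {s : Set ℝ}
    (hσ : HasDerivWithinAt σ σ' s e) (a : ℝ) :
    HasDerivWithinAt (fun e => -a * σ e ^ 2 - e) (-2 * a * (σ e * σ') - 1) s e := by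
  refine (((hσ.fun_pow 2).const_mul (-a)).fun_sub (hasDerivWithinAt_id e s)).congr_deriv ?_
  simp only [Nat.cast_ofNat, Nat.add_one_sub_one, pow_one]
  ring

theorem sigd_neg {σ : ℝ → ℝ} (hanti : StrictAntiOn σ (Ici 0)) (hconv : ConvexOn ℝ (Ici 0) σ)
    (hdiff : DifferentiableOn ℝ σ (Ici 0)) {e : ℝ} (he : 0 ≤ e) : sigd σ e < 0 := by
  have he' : e + 1 ∈ Ici (0 : ℝ) := mem_Ici.2 (by linarith)
  calc sigd σ e ≤ slope σ e (e + 1) :=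
        hconv.derivWithin_le_slope he he' (lt_add_one e) (hdiff e he)
    _ < 0 := by
      rw [slope_def_field, add_sub_cancel_left, div_one, sub_neg]
      exact hanti he he' (lt_add_one e)

theorem sigd2_nonneg {σ : ℝ → ℝ} (hconv : ConvexOn ℝ (Ici 0) σ)
    (hdiff : DifferentiableOn ℝ σ (Ici 0)) (e : ℝ) : 0 ≤ sigd2 σ e :=
  (hconv.monotoneOn_derivWithin hdiff).derivWithin_nonneg

/-- The weight `a` for which `e` solves the first-order condition `2 a σ(e) σ'(e) + 1 = 0`.
Definitionally `alow σ = penaltyOfEffort σ 0`. -/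
noncomputable def penaltyOfEffort (σ : ℝ → ℝ) (e : ℝ) : ℝ := -1 / (2 * σ e * sigd σ e)

structure IsNoiseProfile (σ : ℝ → ℝ) : Prop where
  pos : ∀ e ∈ Ici (0 : ℝ), 0 < σ e
  strictAntiOn : StrictAntiOn σ (Ici 0)
  convexOn : ConvexOn ℝ (Ici 0) σ
  contDiffOn : ContDiffOn ℝ 2 σ (Ici 0)

namespace IsNoiseProfile

variable {σ : ℝ → ℝ} {a e : ℝ}

theorem differentiableOn (h : IsNoiseProfile σ) : DifferentiableOn ℝ σ (Ici 0) :=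
  h.contDiffOn.differentiableOn (by norm_num)

theorem hasDerivWithinAt (h : IsNoiseProfile σ) (he : 0 ≤ e) :
    HasDerivWithinAt σ (sigd σ e) (Ici 0) e :=
  (h.differentiableOn e he).hasDerivWithinAt

theorem hasDerivWithinAt_sigd (h : IsNoiseProfile σ) (he : 0 ≤ e) :
    HasDerivWithinAt (sigd σ) (sigd2 σ e) (Ici 0) e :=
  ((h.contDiffOn.derivWithin (m := 1) (uniqueDiffOn_Ici 0) (by norm_num)).differentiableOn
    (by norm_num) e he).hasDerivWithinAt

theorem mul_sigd_neg (h : IsNoiseProfile σ) (he : 0 ≤ e) : σ e * sigd σ e < 0 :=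
  mul_neg_of_pos_of_neg (h.pos e he) (sigd_neg h.strictAntiOn h.convexOn h.differentiableOn he)

theorem sq_sigd_add_mul_sigd2_pos (h : IsNoiseProfile σ) (he : 0 ≤ e) :
    0 < sigd σ e ^ 2 + σ e * sigd2 σ e := by
  have hd := sigd_neg h.strictAntiOn h.convexOn h.differentiableOn he
  exact add_pos_of_pos_of_nonneg (sq_pos_of_neg hd)
    (mul_nonneg (h.pos e he).le (sigd2_nonneg h.convexOn h.differentiableOn e))

theorem penaltyOfEffort_pos (h : IsNoiseProfile σ) (he : 0 ≤ e) : 0 < penaltyOfEffort σ e :=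
  div_pos_of_neg_of_neg (by norm_num) (by linarith [h.mul_sigd_neg he])

theorem alow_pos (h : IsNoiseProfile σ) : 0 < alow σ :=
  h.penaltyOfEffort_pos le_rfl

theorem hasDerivWithinAt_penaltyOfEffort (h : IsNoiseProfile σ) (he : 0 ≤ e) :
    HasDerivWithinAt (penaltyOfEffort σ)
      (2 * penaltyOfEffort σ e ^ 2 * (sigd σ e ^ 2 + σ e * sigd2 σ e)) (Ici 0) e := by
  have hne : 2 * σ e * sigd σ e ≠ 0 := by linarith [h.mul_sigd_neg he]
  refine ((hasDerivWithinAt_const e _ (-1 : ℝ)).fun_div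
    (((h.hasDerivWithinAt he).const_mul 2).fun_mul (h.hasDerivWithinAt_sigd he)) hne).congr_deriv ?_
  simp only [penaltyOfEffort]
  field_simp
  ring

theorem strictMonoOn_penaltyOfEffort (h : IsNoiseProfile σ) :
    StrictMonoOn (penaltyOfEffort σ) (Ici 0) := by
  refine strictMonoOn_of_hasDerivWithinAt_pos (convex_Ici 0)
    (f' := fun e => 2 * penaltyOfEffort σ e ^ 2 * (sigd σ e ^ 2 + σ e * sigd2 σ e))
    (fun e he => (h.hasDerivWithinAt_penaltyOfEffort he).continuousWithinAt) (fun e he => ?_)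
    (fun e he => ?_) <;> simp only [interior_Ici, mem_Ioi] at he ⊢
  · exact ((h.hasDerivWithinAt_penaltyOfEffort he.le).hasDerivAt (Ici_mem_nhds he)).hasDerivWithinAt
  · have := h.penaltyOfEffort_pos he.le
    have := h.sq_sigd_add_mul_sigd2_pos he.le
    positivity

theorem le_penaltyOfEffort_of_isMaxOn (h : IsNoiseProfile σ) (he : 0 ≤ e)
    (hmax : IsMaxOn (fun e => -a * σ e ^ 2 - e) (Ici 0) e) : a ≤ penaltyOfEffort σ e := by
  have hfoc := hmax.hasDerivWithinAt_Ici_nonpos he ((h.hasDerivWithinAt he).neg_mul_sq_sub_id a)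
  have hg := h.mul_sigd_neg he
  rw [penaltyOfEffort, le_div_iff_of_neg (by linarith)]
  linarith

theorem penaltyOfEffort_eq_of_isMaxOn_of_pos (h : IsNoiseProfile σ) (he : 0 < e)
    (hmax : IsMaxOn (fun e => -a * σ e ^ 2 - e) (Ici 0) e) : penaltyOfEffort σ e = a := by
  have hfoc := (hmax.isLocalMax (Ici_mem_nhds he)).hasDerivAt_eq_zero
    (((h.hasDerivWithinAt he.le).neg_mul_sq_sub_id a).hasDerivAt (Ici_mem_nhds he))
  have hg := h.mul_sigd_neg he.le
  rw [penaltyOfEffort, div_eq_iff (by linarith)]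
  linarith

theorem penaltyOfEffort_eq_of_isMaxOn (h : IsNoiseProfile σ) (he : 0 ≤ e)
    (hmax : IsMaxOn (fun e => -a * σ e ^ 2 - e) (Ici 0) e) (ha : alow σ ≤ a) :
    penaltyOfEffort σ e = a := by
  rcases he.eq_or_lt with rfl | he
  · exact ha.antisymm (h.le_penaltyOfEffort_of_isMaxOn le_rfl hmax)
  · exact h.penaltyOfEffort_eq_of_isMaxOn_of_pos he hmax

theorem leftInvOn_of_uniqueMaxOn (h : IsNoiseProfile σ) {μ : ℝ → ℝ}
    (hμ : ∀ a ∈ Ici (alow σ), UniqueMaxOn (fun e => -a * σ e ^ 2 - e) (Ici 0) (μ a)) :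
    LeftInvOn (penaltyOfEffort σ) μ (Ici (alow σ)) := fun a ha =>
  h.penaltyOfEffort_eq_of_isMaxOn (hμ a ha).1 (isMaxOn_iff.2 (hμ a ha).2.1) ha

end IsNoiseProfile

theorem stmt_3 (σ μ : ℝ → ℝ)
    (hpos : ∀ e ∈ Set.Ici (0:ℝ), 0 < σ e)
    (hanti : StrictAntiOn σ (Set.Ici 0))
    (hconv : ConvexOn ℝ (Set.Ici 0) σ)
    (hC2 : ContDiffOn ℝ 2 σ (Set.Ici 0))
    (hμ : ∀ a : ℝ, 0 < a →
      UniqueMaxOn (fun e => -a * σ e ^ 2 - e) (Set.Ici 0) (μ a)) :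
    ContinuousOn μ (Set.Ici (alow σ)) ∧
    StrictMonoOn μ (Set.Ici (alow σ)) ∧
    ∀ a : ℝ, alow σ < a →
      HasDerivAt μ (2 * a ^ 2 * ((sigd σ (μ a)) ^ 2 + σ (μ a) * sigd2 σ (μ a)))⁻¹ a ∧
      0 < (2 * a ^ 2 * ((sigd σ (μ a)) ^ 2 + σ (μ a) * sigd2 σ (μ a)))⁻¹ := by
  have hσ : IsNoiseProfile σ := ⟨hpos, hanti, hconv, hC2⟩
  have hμ' : ∀ a ∈ Ici (alow σ), UniqueMaxOn (fun e => -a * σ e ^ 2 - e) (Ici 0) (μ a) :=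
    fun a ha => hμ a (hσ.alow_pos.trans_le ha)
  have hmaps : MapsTo μ (Ici (alow σ)) (Ici 0) := fun a ha => (hμ' a ha).1
  have hinv := hσ.leftInvOn_of_uniqueMaxOn hμ'
  have hmono := hσ.strictMonoOn_penaltyOfEffort.strictMonoOn_of_leftInvOn hinv hmaps
  have hcont := hmono.continuousOn_Ici_of_image_Ici
    (hσ.strictMonoOn_penaltyOfEffort.image_Ici_eq_of_leftInvOn hinv hmaps)
  refine ⟨hcont, hmono, fun a ha => ?_⟩
  have hμa : 0 < μ a := (hmaps self_mem_Ici).trans_lt (hmono self_mem_Ici ha.le ha)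
  have hgp := hσ.sq_sigd_add_mul_sigd2_pos hμa.le
  have hφ' := (hσ.hasDerivWithinAt_penaltyOfEffort hμa.le).hasDerivAt (Ici_mem_nhds hμa)
  rw [hinv ha.le] at hφ'
  have ha0 : 0 < a := hσ.alow_pos.trans ha
  refine ⟨hφ'.of_local_left_inverse (hcont.continuousAt (Ici_mem_nhds ha)) (by positivity) ?_,
    by positivity⟩
  filter_upwards [Ici_mem_nhds ha] with b hb using hinv hb
end

section
/- In the data-market game (both in the unbounded-effort case, 𝒜_s = [𝒂̲_s, ∞) with ℰ_s = [0,∞), and in the bounded-effort case, 𝒜_s = [𝒂̲_s, 𝒂̄_s] with ℰ_s = [0, e_s^max]), if (c,a) is a generalized Nash equilibrium, then for every data source s the individual-rationality constraint binds: Σ_{j=1}^M c_s^j − Σ_{j=1}^M a_s^j·Σ_{i=1}^N ξ_{s,i}^j·σ_i(μ_i(𝒂_i))² = μ_s(𝒂_s); that is, the expected total payment to s equals the effort s exerts in equilibrium. -/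
/-- Assumption 3 of the paper: `σ` is positive, strictly decreasing, convex and C² on `[0,∞)`. -/
def SigmaOK (σ : ℝ → ℝ) : Prop :=
  (∀ e ∈ Set.Ici (0:ℝ), 0 < σ e) ∧ StrictAntiOn σ (Set.Ici 0) ∧
    ConvexOn ℝ (Set.Ici 0) σ ∧ ContDiffOn ℝ 2 σ (Set.Ici 0)

variable {N M : ℕ}

/-- `𝒂_s = Σ_j a_s^j`, the total quadratic-penalty weight offered to source `s`. -/
noncomputable def boldA (a : Fin M → Fin N → ℝ) (s : Fin N) : ℝ := ∑ j, a j s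

/-- `σ_i(μ_i(𝒂_i))²`, the equilibrium variance of source `i`'s data. -/
noncomputable def Vval (σ μ : Fin N → ℝ → ℝ) (a : Fin M → Fin N → ℝ) (i : Fin N) : ℝ :=
  σ i (μ i (boldA a i)) ^ 2

/-- `q_s^b(a) = a_s^b Σ_i ξ_{s,i}^b σ_i(μ_i(𝒂_i))²`. -/
noncomputable def qb (σ μ : Fin N → ℝ → ℝ) (ξ : Fin M → Fin N → Fin N → ℝ)
    (a : Fin M → Fin N → ℝ) (b : Fin M) (s : Fin N) : ℝ :=
  a b s * ∑ i, ξ b s i * Vval σ μ a i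

/-- `q_s(a) = Σ_j q_s^j(a) + μ_s(𝒂_s)`. -/
noncomputable def qtot (σ μ : Fin N → ℝ → ℝ) (ξ : Fin M → Fin N → Fin N → ℝ)
    (a : Fin M → Fin N → ℝ) (s : Fin N) : ℝ :=
  (∑ j, qb σ μ ξ a j s) + μ s (boldA a s)

/-- Aggregator `b`'s loss `L^b`. -/
noncomputable def Lagg (σ μ : Fin N → ℝ → ℝ) (ξ : Fin M → Fin N → Fin N → ℝ)
    (γ : Fin M → Fin N → ℝ) (c a : Fin M → Fin N → ℝ) (b : Fin M) : ℝ :=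
  (∑ i, γ b i * Vval σ μ a i) +
    ∑ i, (c b i - a b i * ∑ l, ξ b i l * Vval σ μ a l)

/-- Feasibility of `(c^b, a^b)` for aggregator `b` within the profile `(c,a)`:
nonnegative weights, `𝒂_s ∈ 𝒜_s`, individual rationality and nonnegative expected payments. -/
def Feasible (σ μ : Fin N → ℝ → ℝ) (ξ : Fin M → Fin N → Fin N → ℝ)
    (𝒜 : Fin N → Set ℝ) (c a : Fin M → Fin N → ℝ) (b : Fin M) : Prop :=
  ∀ s, 0 ≤ a b s ∧ boldA a s ∈ 𝒜 s ∧
    μ s (boldA a s) ≤ (∑ j, c j s) - ∑ j, qb σ μ ξ a j s ∧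
    0 ≤ c b s - qb σ μ ξ a b s

/-- Generalized Nash equilibrium of the game between the aggregators. -/
def IsGNE (σ μ : Fin N → ℝ → ℝ) (ξ : Fin M → Fin N → Fin N → ℝ)
    (γ : Fin M → Fin N → ℝ) (𝒜 : Fin N → Set ℝ) (c a : Fin M → Fin N → ℝ) : Prop :=
  (∀ b, Feasible σ μ ξ 𝒜 c a b) ∧
    ∀ b (c' a' : Fin N → ℝ),
      Feasible σ μ ξ 𝒜 (Function.update c b c') (Function.update a b a') b →
      Lagg σ μ ξ γ c a b ≤ Lagg σ μ ξ γ (Function.update c b c') (Function.update a b a') b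

lemma alow_pos {σ : ℝ → ℝ} (h : SigmaOK σ) : 0 < alow σ := by
  obtain ⟨hpos, hanti, hconv, hC⟩ := h
  have hdiff : DifferentiableWithinAt ℝ σ (Set.Ici 0) 0 :=
    hC.differentiableOn (by norm_num) 0 Set.self_mem_Ici
  have hslope : slope σ 0 1 < 0 := by
    have := hanti Set.self_mem_Ici (Set.mem_Ici.2 zero_le_one) one_pos
    simp only [slope_def_field, sub_zero, div_one]
    linarith
  have hderiv : sigd σ 0 < 0 :=
    (hconv.derivWithin_le_slope Set.self_mem_Ici (by norm_num) one_pos hdiff).trans_lt hslope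
  have hden : 2 * σ 0 * sigd σ 0 < 0 :=
    mul_neg_of_pos_of_neg (by linarith [hpos 0 Set.self_mem_Ici]) hderiv
  exact div_pos_of_neg_of_neg (by norm_num) hden

theorem Fintype.sum_update_sub {ι β : Type*} [Fintype ι] [DecidableEq ι] [AddCommGroup β]
    (f : ι → β) (i : ι) (d : β) : ∑ j, Function.update f i (f i - d) j = ∑ j, f j - d := by
  rw [Finset.sum_update_of_mem (Finset.mem_univ i), Finset.sum_eq_add_sum_sdiff_singleton_of_mem
    (Finset.mem_univ i) f]
  abel

section Deviation

variable {σ μ : Fin N → ℝ → ℝ} {ξ : Fin M → Fin N → Fin N → ℝ} {c a : Fin M → Fin N → ℝ}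
  {b : Fin M}

lemma Lagg_update_sub (γ : Fin M → Fin N → ℝ) (d : Fin N → ℝ) :
    Lagg σ μ ξ γ (Function.update c b (c b - d)) a b = Lagg σ μ ξ γ c a b - ∑ i, d i := by
  simp only [Lagg, Function.update_self, Pi.sub_apply, Finset.sum_sub_distrib]
  ring

lemma sum_update_sub_apply (d : Fin N → ℝ) (s : Fin N) :
    ∑ j, Function.update c b (c b - d) j s = ∑ j, c j s - d s := by
  rw [← Fintype.sum_update_sub (fun j => c j s) b (d s)]
  refine Finset.sum_congr rfl fun j _ => ?_
  rcases eq_or_ne j b with rfl | hj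
  · simp
  · simp [hj]

lemma Feasible.update_sub {𝒜 : Fin N → Set ℝ} (h : Feasible σ μ ξ 𝒜 c a b) {d : Fin N → ℝ}
    (hIR : ∀ s, d s ≤ (∑ j, c j s) - (∑ j, qb σ μ ξ a j s) - μ s (boldA a s))
    (hpay : ∀ s, d s ≤ c b s - qb σ μ ξ a b s) :
    Feasible σ μ ξ 𝒜 (Function.update c b (c b - d)) a b := by
  intro s
  obtain ⟨ha, hA, -, -⟩ := h s
  refine ⟨ha, hA, ?_, ?_⟩
  · rw [sum_update_sub_apply]
    linarith [hIR s]
  · rw [Function.update_self, Pi.sub_apply]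
    linarith [hpay s]

end Deviation

section Equilibrium

variable {σ μ : Fin N → ℝ → ℝ} {ξ : Fin M → Fin N → Fin N → ℝ} {γ : Fin M → Fin N → ℝ}
  {𝒜 : Fin N → Set ℝ} {c a : Fin M → Fin N → ℝ}

/-- Otherwise `b` could lower `c_s^b` by the smaller slack and strictly decrease its loss. -/
lemma IsGNE.min_slack_nonpos (h : IsGNE σ μ ξ γ 𝒜 c a) (b : Fin M) (s : Fin N) :
    min ((∑ j, c j s) - (∑ j, qb σ μ ξ a j s) - μ s (boldA a s))
      (c b s - qb σ μ ξ a b s) ≤ 0 := by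
  set δ := min ((∑ j, c j s) - (∑ j, qb σ μ ξ a j s) - μ s (boldA a s))
    (c b s - qb σ μ ξ a b s)
  by_contra! hδ
  have hfeas : Feasible σ μ ξ 𝒜 (Function.update c b (c b - Pi.single s δ)) a b := by
    refine (h.1 b).update_sub (fun s' => ?_) (fun s' => ?_) <;>
      rcases eq_or_ne s' s with rfl | hs'
    · rw [Pi.single_eq_same]; exact min_le_left _ _
    · simpa [hs'] using ((h.1 b) s').2.2.1
    · rw [Pi.single_eq_same]; exact min_le_right _ _
    · simpa [hs'] using ((h.1 b) s').2.2.2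
  have hle := h.2 b (c b - Pi.single s δ) (a b) (by rwa [Function.update_eq_self])
  rw [Function.update_eq_self, Lagg_update_sub, Finset.sum_pi_single'] at hle
  simp only [Finset.mem_univ, if_true] at hle
  linarith

lemma IsGNE.individualRationality_tight (h : IsGNE σ μ ξ γ 𝒜 c a) (b₀ : Fin M) {s : Fin N}
    (hμ : 0 ≤ μ s (boldA a s)) :
    (∑ j, c j s) - (∑ j, qb σ μ ξ a j s) = μ s (boldA a s) := by
  refine le_antisymm (not_lt.1 fun hslack => ?_) ((h.1 b₀) s).2.2.1
  obtain ⟨b, -, hb⟩ : ∃ b ∈ Finset.univ, (0 : ℝ) < c b s - qb σ μ ξ a b s := by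
    refine Finset.exists_lt_of_sum_lt ?_
    rw [Finset.sum_const_zero, Finset.sum_sub_distrib]
    linarith
  exact (h.min_slack_nonpos b s).not_gt (lt_min (by linarith) hb)

end Equilibrium

theorem stmt_5_general (N M : ℕ) (hM : 2 ≤ M)
    (σ μ : Fin N → ℝ → ℝ) (ξ : Fin M → Fin N → Fin N → ℝ) (γ : Fin M → Fin N → ℝ)
    (E 𝒜 : Fin N → Set ℝ)
    (hσ : ∀ s, SigmaOK (σ s))
    (hμ : ∀ s, ∀ a : ℝ, 0 < a →
      UniqueMaxOn (fun e => -a * σ s e ^ 2 - e) (E s) (μ s a))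
    (hcase :
      (∀ s, E s = Set.Ici 0 ∧ 𝒜 s = Set.Ici (alow (σ s))) ∨
      (∃ emax aubar : Fin N → ℝ, ∀ s, 0 < emax s ∧ E s = Set.Icc 0 (emax s) ∧
        IsLeast {x : ℝ | 0 < x ∧ μ s x = emax s} (aubar s) ∧
        𝒜 s = Set.Icc (alow (σ s)) (aubar s)))
    (c a : Fin M → Fin N → ℝ)
    (hGNE : IsGNE σ μ ξ γ 𝒜 c a) :
    ∀ s, (∑ j, c j s) - (∑ j, qb σ μ ξ a j s) = μ s (boldA a s) := by
  intro s
  have b₀ : Fin M := ⟨0, by omega⟩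
  have hsets : E s ⊆ Set.Ici 0 ∧ 𝒜 s ⊆ Set.Ici (alow (σ s)) := by
    rcases hcase with h | ⟨emax, aubar, h⟩
    · exact ⟨(h s).1.le, (h s).2.le⟩
    · exact ⟨(h s).2.1 ▸ Set.Icc_subset_Ici_self, (h s).2.2.2 ▸ Set.Icc_subset_Ici_self⟩
  have hA : 0 < boldA a s := (alow_pos (hσ s)).trans_le (hsets.2 ((hGNE.1 b₀) s).2.1)
  exact hGNE.individualRationality_tight b₀ (hsets.1 (hμ s _ hA).1)

theorem stmt_5 (N M : ℕ) (hN : 1 ≤ N) (hM : 2 ≤ M)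
    (σ μ : Fin N → ℝ → ℝ) (ξ : Fin M → Fin N → Fin N → ℝ) (γ : Fin M → Fin N → ℝ)
    (E 𝒜 : Fin N → Set ℝ)
    (hσ : ∀ s, SigmaOK (σ s))
    (hμ : ∀ s, ∀ a : ℝ, 0 < a →
      UniqueMaxOn (fun e => -a * σ s e ^ 2 - e) (E s) (μ s a))
    (hξ0 : ∀ b i l, 0 ≤ ξ b i l) (hξ1 : ∀ b i, ξ b i i = 1)
    (hcase :
      (∀ s, E s = Set.Ici 0 ∧ 𝒜 s = Set.Ici (alow (σ s))) ∨
      (∃ emax aubar : Fin N → ℝ, ∀ s, 0 < emax s ∧ E s = Set.Icc 0 (emax s) ∧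
        IsLeast {x : ℝ | 0 < x ∧ μ s x = emax s} (aubar s) ∧
        𝒜 s = Set.Icc (alow (σ s)) (aubar s)))
    (c a : Fin M → Fin N → ℝ)
    (hGNE : IsGNE σ μ ξ γ 𝒜 c a) :
    ∀ s, (∑ j, c j s) - (∑ j, qb σ μ ξ a j s) = μ s (boldA a s) :=
  stmt_5_general N M hM σ μ ξ γ E 𝒜 hσ hμ hcase c a hGNE
end

section
/- Let σ : [0,∞) → (0,∞) be strictly decreasing, convex, and twice continuously differentiable, let 𝒂̲ := −1/(2σ(0)σ′(0)), and for a > 0 let μ(a) be the unique maximizer of e ↦ −a·σ(e)² − e over [0,∞). Let w > 0, t ≥ 0, and let 𝒂̲ ≤ α ≤ β with t ≤ β. Then the function F(a) = w·σ(μ(a+t))² + μ(a+t) attains a unique minimum over the set { a ≥ 0 : α ≤ a + t ≤ β }, namely at a* = min(β, max(α, t, w)) − t; equivalently, the minimizing total parameter 𝒂* = a* + t is the projection of max(w, t) onto [α, β]. -/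
/-!
Write `s a = σ (μ a) ^ 2` and `F a = w * s a + μ a`. Comparing the optimality of `μ a` and `μ c`
(revealed preference) gives `(a - c) * (s a - s c) ≤ 0`, i.e. `s` is antitone, and
`F a - F c ≥ (w - c) * (s a - s c)`. When `c` is the projection of `w` onto the admissible interval,
`(w - c) * (a - c) ≤ 0`, so the right-hand side is nonnegative and `c` is a minimizer.
A tie `F a = F c` makes `μ a` optimal for `c` too, hence `μ a = μ c`. But distinct parameters
`≥ 𝒂̲` have distinct maximizers: at an interior maximizer `m` the first-order condition
`2 r σ m σ' m = -1` pins down `r`, and the corner `0` is optimal only for `r ≤ 𝒂̲`.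
-/

open Set

section Payoff

variable {g : ℝ → ℝ} {S : Set ℝ}

lemma UniqueMaxOn.isMaxOn {f : ℝ → ℝ} {m : ℝ} (h : UniqueMaxOn f S m) : IsMaxOn f S m :=
  isMaxOn_iff.mpr h.2.1

lemma mul_sub_nonpos_of_isMaxOn {a c x y : ℝ}
    (hx : IsMaxOn (fun e => -a * g e - e) S x) (hy : IsMaxOn (fun e => -c * g e - e) S y)
    (hxS : x ∈ S) (hyS : y ∈ S) : (a - c) * (g x - g y) ≤ 0 := by
  have hxy := isMaxOn_iff.mp hx y hyS
  have hyx := isMaxOn_iff.mp hy x hxS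
  linear_combination hxy + hyx

lemma add_mul_sub_le_of_isMaxOn {c w x y : ℝ}
    (hy : IsMaxOn (fun e => -c * g e - e) S y) (hx : x ∈ S) :
    w * g y + y + (w - c) * (g x - g y) ≤ w * g x + x := by
  linear_combination isMaxOn_iff.mp hy x hx

lemma IsMaxOn.mul_add_one_nonneg {r m g' : ℝ} (h : IsMaxOn (fun e => -r * g e - e) (Ici 0) m)
    (hm : 0 ≤ m) (hg : HasDerivWithinAt g g' (Ici 0) m) : 0 ≤ r * g' + 1 := by
  have hseg : segment ℝ m (m + 1) ⊆ Ici 0 := by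
    rw [segment_eq_Icc (by linarith)]
    exact fun e he => hm.trans he.1
  have := h.localize.hasFDerivWithinAt_nonpos
    (((hg.const_mul (-r)).sub (hasDerivWithinAt_id m _)).hasFDerivWithinAt)
    (mem_posTangentConeAt_of_segment_subset hseg)
  simp only [ContinuousLinearMap.toSpanSingleton_apply, smul_eq_mul, one_mul] at this
  linarith

lemma IsMaxOn.mul_add_one_eq_zero {r m g' : ℝ} (h : IsMaxOn (fun e => -r * g e - e) (Ici 0) m)
    (hm : 0 < m) (hg : HasDerivWithinAt g g' (Ici 0) m) : r * g' + 1 = 0 := by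
  have := (h.isLocalMax (Ici_mem_nhds hm)).hasDerivAt_eq_zero
    (((hg.const_mul (-r)).sub (hasDerivWithinAt_id m _)).hasDerivAt (Ici_mem_nhds hm))
  linarith

lemma IsMaxOn.eq_of_pos {p q m g' : ℝ} (hp : IsMaxOn (fun e => -p * g e - e) (Ici 0) m)
    (hq : IsMaxOn (fun e => -q * g e - e) (Ici 0) m) (hm : 0 < m)
    (hg : HasDerivWithinAt g g' (Ici 0) m) : p = q := by
  have hpm := hp.mul_add_one_eq_zero hm hg
  have hqm := hq.mul_add_one_eq_zero hm hg
  have hg' : g' ≠ 0 := by rintro rfl; simp at hpm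
  have : (p - q) * g' = 0 := by linear_combination hpm - hqm
  exact sub_eq_zero.mp ((mul_eq_zero.mp this).resolve_right hg')

end Payoff

lemma min_max_mem_Icc {lo hi : ℝ} (h : lo ≤ hi) (w : ℝ) : min hi (max lo w) ∈ Icc lo hi :=
  ⟨le_min h (le_max_left _ _), min_le_left _ _⟩

lemma AntitoneOn.mul_sub_min_max_nonneg {φ : ℝ → ℝ} {lo hi w a : ℝ}
    (hφ : AntitoneOn φ (Icc lo hi)) (ha : a ∈ Icc lo hi) :
    0 ≤ (w - min hi (max lo w)) * (φ a - φ (min hi (max lo w))) := by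
  set c := min hi (max lo w) with hc_def
  have hc : c ∈ Icc lo hi := min_max_mem_Icc (ha.1.trans ha.2) w
  rcases lt_trichotomy a c with hac | rfl | hca
  · have hwc : c ≤ w := by
      rcases max_cases lo w with h | h <;> rcases min_cases hi (max lo w) with h' | h' <;>
        linarith [ha.1]
    exact mul_nonneg (by linarith) (by linarith [hφ ha hc hac.le])
  · simp
  · have hwc : w ≤ c := by
      rcases max_cases lo w with h | h <;> rcases min_cases hi (max lo w) with h' | h' <;>
        linarith [ha.2]
    exact mul_nonneg_of_nonpos_of_nonpos (by linarith) (by linarith [hφ hc ha hca.le])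

section Effort

variable {σ μ : ℝ → ℝ}

def reducedCost (σ μ : ℝ → ℝ) (w a : ℝ) : ℝ := w * σ (μ a) ^ 2 + μ a

lemma sigd_zero_neg (hanti : StrictAntiOn σ (Ici 0)) (hconv : ConvexOn ℝ (Ici 0) σ)
    (hd : DifferentiableWithinAt ℝ σ (Ici 0) 0) : sigd σ 0 < 0 := by
  have h01 : (0 : ℝ) ∈ Ici 0 := self_mem_Ici
  have h11 : (1 : ℝ) ∈ Ici 0 := mem_Ici.mpr zero_le_one
  calc sigd σ 0 ≤ slope σ 0 1 :=
        hconv.le_slope_of_hasDerivWithinAt h01 h11 zero_lt_one hd.hasDerivWithinAt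
    _ = σ 1 - σ 0 := by simp [slope_def_field]
    _ < 0 := sub_neg.mpr (hanti h01 h11 zero_lt_one)

lemma alow_pos_s9 (hσ0 : 0 < σ 0) (hd0 : sigd σ 0 < 0) : 0 < alow σ :=
  div_pos_of_neg_of_neg (by norm_num) (mul_neg_of_pos_of_neg (by positivity) hd0)

lemma hasDerivWithinAt_sq_sigd {m : ℝ} (hd : DifferentiableWithinAt ℝ σ (Ici 0) m) :
    HasDerivWithinAt (fun e => σ e ^ 2) (2 * σ m * sigd σ m) (Ici 0) m := by
  simpa [sigd] using hd.hasDerivWithinAt.fun_pow 2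

lemma le_alow_of_isMaxOn_zero {r : ℝ} (hσ0 : 0 < σ 0) (hd0 : sigd σ 0 < 0)
    (hd : DifferentiableWithinAt ℝ σ (Ici 0) 0)
    (h : IsMaxOn (fun e => -r * σ e ^ 2 - e) (Ici 0) 0) : r ≤ alow σ := by
  have := h.mul_add_one_nonneg le_rfl (hasDerivWithinAt_sq_sigd hd)
  rw [alow, le_div_iff_of_neg (mul_neg_of_pos_of_neg (by positivity) hd0)]
  linarith

lemma eq_of_isMaxOn_of_isMaxOn {p q m : ℝ} (hσ0 : 0 < σ 0) (hd0 : sigd σ 0 < 0)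
    (hd : DifferentiableOn ℝ σ (Ici 0)) (hp : alow σ ≤ p) (hq : alow σ ≤ q) (hm : 0 ≤ m)
    (hpm : IsMaxOn (fun e => -p * σ e ^ 2 - e) (Ici 0) m)
    (hqm : IsMaxOn (fun e => -q * σ e ^ 2 - e) (Ici 0) m) : p = q := by
  rcases hm.eq_or_lt with rfl | hm
  · have := le_alow_of_isMaxOn_zero hσ0 hd0 (hd 0 self_mem_Ici) hpm
    have := le_alow_of_isMaxOn_zero hσ0 hd0 (hd 0 self_mem_Ici) hqm
    linarith
  · exact hpm.eq_of_pos hqm hm (hasDerivWithinAt_sq_sigd (hd m hm.le))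

lemma antitoneOn_sq_comp
    (hμ : ∀ a : ℝ, 0 < a → UniqueMaxOn (fun e => -a * σ e ^ 2 - e) (Ici 0) (μ a)) :
    AntitoneOn (fun r => σ (μ r) ^ 2) (Ioi 0) := by
  intro a ha c hc hac
  have := mul_sub_nonpos_of_isMaxOn (hμ a ha).isMaxOn (hμ c hc).isMaxOn (hμ a ha).1 (hμ c hc).1
  rcases hac.eq_or_lt with rfl | hlt
  · rfl
  · exact sub_nonneg.mp (nonneg_of_mul_nonpos_right this (by linarith))

lemma reducedCost_min_max_le {w lo hi a : ℝ}
    (hμ : ∀ a : ℝ, 0 < a → UniqueMaxOn (fun e => -a * σ e ^ 2 - e) (Ici 0) (μ a))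
    (hlo : 0 < lo) (ha : a ∈ Icc lo hi) :
    reducedCost σ μ w (min hi (max lo w)) ≤ reducedCost σ μ w a := by
  set c := min hi (max lo w)
  have hc : c ∈ Icc lo hi := min_max_mem_Icc (ha.1.trans ha.2) w
  have hsign : 0 ≤ (w - c) * (σ (μ a) ^ 2 - σ (μ c) ^ 2) :=
    ((antitoneOn_sq_comp hμ).mono fun x hx => hlo.trans_le hx.1).mul_sub_min_max_nonneg ha
  have hcost := add_mul_sub_le_of_isMaxOn (w := w) (hμ c (hlo.trans_le hc.1)).isMaxOn
    (hμ a (hlo.trans_le ha.1)).1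
  rw [reducedCost, reducedCost]
  linarith

lemma reducedCost_min_max_lt {w lo hi a : ℝ} (hσ0 : 0 < σ 0) (hd0 : sigd σ 0 < 0)
    (hd : DifferentiableOn ℝ σ (Ici 0))
    (hμ : ∀ a : ℝ, 0 < a → UniqueMaxOn (fun e => -a * σ e ^ 2 - e) (Ici 0) (μ a))
    (hlo : alow σ ≤ lo) (ha : a ∈ Icc lo hi) (hne : a ≠ min hi (max lo w)) :
    reducedCost σ μ w (min hi (max lo w)) < reducedCost σ μ w a := by
  set c := min hi (max lo w)
  have hlo0 : 0 < lo := (alow_pos_s9 hσ0 hd0).trans_le hlo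
  have hc : c ∈ Icc lo hi := min_max_mem_Icc (ha.1.trans ha.2) w
  have hμa := hμ a (hlo0.trans_le ha.1)
  have hμc := hμ c (hlo0.trans_le hc.1)
  have hsign : 0 ≤ (w - c) * (σ (μ a) ^ 2 - σ (μ c) ^ 2) :=
    ((antitoneOn_sq_comp hμ).mono fun x hx => hlo0.trans_le hx.1).mul_sub_min_max_nonneg ha
  by_contra! hge
  rw [reducedCost, reducedCost] at hge
  have hμeq : μ a = μ c := hμc.2.2 _ hμa.1 fun e he =>
    (hμc.2.1 e he).trans (by linear_combination hge + hsign)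
  exact hne (eq_of_isMaxOn_of_isMaxOn hσ0 hd0 hd (hlo.trans ha.1) (hlo.trans hc.1) hμc.1
    (hμeq ▸ hμa.isMaxOn) hμc.isMaxOn)

end Effort

theorem stmt_9_general (σ μ : ℝ → ℝ)
    (hpos : ∀ e ∈ Set.Ici (0:ℝ), 0 < σ e)
    (hanti : StrictAntiOn σ (Set.Ici 0))
    (hconv : ConvexOn ℝ (Set.Ici 0) σ)
    (hC2 : ContDiffOn ℝ 2 σ (Set.Ici 0))
    (hμ : ∀ a : ℝ, 0 < a →
      UniqueMaxOn (fun e => -a * σ e ^ 2 - e) (Set.Ici 0) (μ a))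
    (w t α β : ℝ)
    (hα : alow σ ≤ α) (hαβ : α ≤ β) (htβ : t ≤ β) :
    (min β (max α (max t w)) - t) ∈ {x : ℝ | 0 ≤ x ∧ α ≤ x + t ∧ x + t ≤ β} ∧
    (∀ x ∈ {x : ℝ | 0 ≤ x ∧ α ≤ x + t ∧ x + t ≤ β},
      w * σ (μ (min β (max α (max t w)))) ^ 2 + μ (min β (max α (max t w))) ≤
        w * σ (μ (x + t)) ^ 2 + μ (x + t)) ∧
    (∀ x ∈ {x : ℝ | 0 ≤ x ∧ α ≤ x + t ∧ x + t ≤ β},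
      x ≠ min β (max α (max t w)) - t →
      w * σ (μ (min β (max α (max t w)))) ^ 2 + μ (min β (max α (max t w))) <
        w * σ (μ (x + t)) ^ 2 + μ (x + t)) := by
  have hd : DifferentiableOn ℝ σ (Ici 0) := hC2.differentiableOn (by norm_num)
  have hσ0 := hpos 0 self_mem_Ici
  have hd0 := sigd_zero_neg hanti hconv (hd 0 self_mem_Ici)
  have hlo : alow σ ≤ max α t := hα.trans (le_max_left _ _)
  have hadm : ∀ x ∈ {x : ℝ | 0 ≤ x ∧ α ≤ x + t ∧ x + t ≤ β}, x + t ∈ Icc (max α t) β :=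
    fun x hx => ⟨max_le hx.2.1 (by linarith [hx.1]), hx.2.2⟩
  rw [← max_assoc]
  have hc := min_max_mem_Icc (max_le hαβ htβ) w
  refine ⟨?_, fun x hx => ?_, fun x hx hne => ?_⟩
  · exact ⟨by linarith [hc.1, le_max_right α t], by linarith [hc.1, le_max_left α t],
      by linarith [hc.2]⟩
  · exact reducedCost_min_max_le hμ ((alow_pos_s9 hσ0 hd0).trans_le hlo) (hadm x hx)
  · exact reducedCost_min_max_lt hσ0 hd0 hd hμ hlo (hadm x hx) fun h => hne (by linarith)

theorem stmt_9 (σ μ : ℝ → ℝ)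
    (hpos : ∀ e ∈ Set.Ici (0:ℝ), 0 < σ e)
    (hanti : StrictAntiOn σ (Set.Ici 0))
    (hconv : ConvexOn ℝ (Set.Ici 0) σ)
    (hC2 : ContDiffOn ℝ 2 σ (Set.Ici 0))
    (hμ : ∀ a : ℝ, 0 < a →
      UniqueMaxOn (fun e => -a * σ e ^ 2 - e) (Set.Ici 0) (μ a))
    (w t α β : ℝ) (hw : 0 < w) (ht : 0 ≤ t)
    (hα : alow σ ≤ α) (hαβ : α ≤ β) (htβ : t ≤ β) :
    (min β (max α (max t w)) - t) ∈ {x : ℝ | 0 ≤ x ∧ α ≤ x + t ∧ x + t ≤ β} ∧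
    (∀ x ∈ {x : ℝ | 0 ≤ x ∧ α ≤ x + t ∧ x + t ≤ β},
      w * σ (μ (min β (max α (max t w)))) ^ 2 + μ (min β (max α (max t w))) ≤
        w * σ (μ (x + t)) ^ 2 + μ (x + t)) ∧
    (∀ x ∈ {x : ℝ | 0 ≤ x ∧ α ≤ x + t ∧ x + t ≤ β},
      x ≠ min β (max α (max t w)) - t →
      w * σ (μ (min β (max α (max t w)))) ^ 2 + μ (min β (max α (max t w))) <
        w * σ (μ (x + t)) ^ 2 + μ (x + t)) :=
  stmt_9_general σ μ hpos hanti hconv hC2 hμ w t α β hα hαβ htβ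
end
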